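/- Let n ≥ 1 and let w : B₁ → ℝ be C² on the open unit ball B₁ ⊆ ℝⁿ. Suppose S ⊆ B₁ is a set which is discrete in its subspace topology, and suppose that for every x ∈ B₁ \ S and every nonzero v ∈ ℝⁿ one has D²w(x)[v, v] < |v|². Then for all distinct points x, y ∈ B₁, ⟨Dw(x) − Dw(y), x − y⟩ < |x − y|². -/

import Mathlib

open Metric Set Topology Filter
open scoped RealInnerProductSpace

/-!
Along the segment `t ↦ y + t • (x - y)`, the derivative of `t ↦ Dw(y + t • (x - y)) (x - y)` is
the Hessian `D²w[x - y, x - y]`. It is `< |x - y|²` off `S`, hence `≤ |x - y|²` everywhere by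
continuity, as a discrete set in a space without isolated points has dense complement. A segment
with distinct endpoints is connected and so cannot lie inside `S`, so the inequality is strict
somewhere, and integrating over `[0, 1]` gives the strict inequality for the gradients.
-/

section Topology

variable {X : Type*} [TopologicalSpace X]

theorem IsDiscrete.dense_compl [∀ x : X, (𝓝[≠] x).NeBot] {S : Set X} (hS : IsDiscrete S) :
    Dense Sᶜ := by
  refine interior_eq_empty_iff_dense_compl.mp (eq_empty_of_forall_notMem fun a ha => ?_)
  have hbot : 𝓝[≠] a ⊓ 𝓟 S = ⊥ := isDiscrete_iff_nhdsNE.mp hS a (interior_subset ha)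
  have hle : 𝓝[≠] a ≤ 𝓟 S :=
    nhdsWithin_le_nhds.trans (le_principal_iff.mpr (mem_interior_iff_mem_nhds.mp ha))
  exact (𝓝[≠] a).neBot_iff.mp inferInstance (by rwa [inf_eq_left.mpr hle] at hbot)

theorem ContinuousOn.le_of_le_of_dense_compl {α : Type*} [LinearOrder α] [TopologicalSpace α]
    [OrderClosedTopology α] {U S : Set X} (hU : IsOpen U) (hS : Dense Sᶜ) {f : X → α} {c : α}
    (hf : ContinuousOn f U) (hle : ∀ a ∈ U \ S, f a ≤ c) {a : X} (ha : a ∈ U) : f a ≤ c :=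
  ContinuousWithinAt.closure_le (hS.open_subset_closure_inter hU ha)
    ((hf a ha).mono inter_subset_left) continuousWithinAt_const hle

theorem IsDiscrete.exists_notMem_of_continuousOn_Icc {S : Set X} (hS : IsDiscrete S)
    {γ : ℝ → X} {a b : ℝ} (hab : a ≤ b) (hγ : ContinuousOn γ (Icc a b)) (hne : γ a ≠ γ b) :
    ∃ t ∈ Icc a b, γ t ∉ S := by
  by_contra! hmaps
  exact hne (isPreconnected_Icc.constant_of_mapsTo hS hγ hmaps (left_mem_Icc.mpr hab)
    (right_mem_Icc.mpr hab))

end Topology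

theorem image_sub_lt_mul_sub_of_hasDerivAt_le_of_exists_lt {φ φ' : ℝ → ℝ} {a b c : ℝ}
    (hab : a < b) (hφ : ∀ t ∈ Icc a b, HasDerivAt φ (φ' t) t) (hφ' : ContinuousOn φ' (Icc a b))
    (hle : ∀ t ∈ Icc a b, φ' t ≤ c) (hlt : ∃ t ∈ Icc a b, φ' t < c) :
    φ b - φ a < c * (b - a) := by
  have hFTC : ∫ t in a..b, φ' t = φ b - φ a :=
    intervalIntegral.integral_eq_sub_of_hasDerivAt (by rwa [uIcc_of_le hab.le])
      (hφ'.intervalIntegrable_of_Icc hab.le)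
  calc φ b - φ a = ∫ t in a..b, φ' t := hFTC.symm
    _ < ∫ _ in a..b, c :=
      intervalIntegral.integral_lt_integral_of_continuousOn_of_le_of_exists_lt hab hφ'
        continuousOn_const (fun t ht => hle t (Ioc_subset_Icc_self ht)) hlt
    _ = c * (b - a) := by simp [mul_comm]

section Calculus

variable {E F : Type*} [NormedAddCommGroup E] [NormedSpace ℝ E] [NormedAddCommGroup F]
  [NormedSpace ℝ F]

theorem ContDiffAt.hasDerivAt_fderiv_add_smul_apply {w : E → F} {y v : E} {t : ℝ}
    (hw : ContDiffAt ℝ 2 w (y + t • v)) :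
    HasDerivAt (fun s : ℝ => fderiv ℝ w (y + s • v) v)
      (iteratedFDeriv ℝ 2 w (y + t • v) ![v, v]) t := by
  have hline : HasDerivAt (fun s : ℝ => y + s • v) v t := by
    simpa using ((hasDerivAt_id t).smul_const v).const_add y
  have hfderiv : HasFDerivAt (fderiv ℝ w) (fderiv ℝ (fderiv ℝ w) (y + t • v)) (y + t • v) :=
    ((hw.fderiv_right (m := 1) le_rfl).differentiableAt one_ne_zero).hasFDerivAt
  rw [iteratedFDeriv_two_apply]
  exact ((ContinuousLinearMap.apply ℝ F v).hasFDerivAt.comp t (hfderiv.comp_hasDerivAt t hline))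

theorem ContDiffOn.continuousOn_iteratedFDeriv_two_apply {U : Set E} {w : E → F}
    (hw : ContDiffOn ℝ 2 w U) (hU : IsOpen U) (v : E) :
    ContinuousOn (fun a => iteratedFDeriv ℝ 2 w a ![v, v]) U :=
  (ContinuousMultilinearMap.apply ℝ (fun _ : Fin 2 => E) F ![v, v]).continuous.comp_continuousOn
    (ContinuousOn.continuousOn_iteratedFDeriv hw hU le_rfl)

theorem fderiv_apply_sub_lt_of_iteratedFDeriv_two_le {U : Set E} (hU : IsOpen U)
    (hUc : Convex ℝ U) {w : E → ℝ} (hw : ContDiffOn ℝ 2 w U) {x y : E} (hx : x ∈ U) (hy : y ∈ U)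
    {c : ℝ} (hle : ∀ a ∈ U, iteratedFDeriv ℝ 2 w a ![x - y, x - y] ≤ c)
    (hlt : ∃ t ∈ Icc (0 : ℝ) 1, iteratedFDeriv ℝ 2 w (y + t • (x - y)) ![x - y, x - y] < c) :
    fderiv ℝ w x (x - y) - fderiv ℝ w y (x - y) < c := by
  have hseg : MapsTo (fun t : ℝ => y + t • (x - y)) (Icc 0 1) U :=
    fun t ht => hUc.add_smul_sub_mem hy hx ht
  simpa using image_sub_lt_mul_sub_of_hasDerivAt_le_of_exists_lt zero_lt_one
    (fun t ht => (hw.contDiffAt (hU.mem_nhds (hseg ht))).hasDerivAt_fderiv_add_smul_apply)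
    ((hw.continuousOn_iteratedFDeriv_two_apply hU _).comp (by fun_prop) hseg)
    (fun t ht => hle _ (hseg ht)) hlt

end Calculus

theorem gradient_monotonicity_of_hessian_lt_one_general
    (n : ℕ)
    (w : EuclideanSpace ℝ (Fin n) → ℝ)
    (hw : ContDiffOn ℝ 2 w (Metric.ball 0 1))
    (S : Set (EuclideanSpace ℝ (Fin n)))
    (hSdisc : DiscreteTopology S)
    (hHess : ∀ x ∈ Metric.ball (0 : EuclideanSpace ℝ (Fin n)) 1 \ S,
      ∀ v : EuclideanSpace ℝ (Fin n), v ≠ 0 →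
        iteratedFDeriv ℝ 2 w x ![v, v] < ‖v‖ ^ 2) :
    ∀ x ∈ Metric.ball (0 : EuclideanSpace ℝ (Fin n)) 1,
      ∀ y ∈ Metric.ball (0 : EuclideanSpace ℝ (Fin n)) 1, x ≠ y →
        ⟪gradient w x - gradient w y, x - y⟫ < ‖x - y‖ ^ 2 := by
  intro x hx y hy hxy
  have hv : x - y ≠ 0 := sub_ne_zero.mpr hxy
  have : Nontrivial (EuclideanSpace ℝ (Fin n)) := ⟨⟨x, y, hxy⟩⟩
  have hS : IsDiscrete S := isDiscrete_iff_discreteTopology.mpr hSdisc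
  obtain ⟨t, ht, htS⟩ := hS.exists_notMem_of_continuousOn_Icc zero_le_one
    (γ := fun t : ℝ => y + t • (x - y)) (by fun_prop) (by simpa using hxy.symm)
  have hle : ∀ a ∈ ball (0 : EuclideanSpace ℝ (Fin n)) 1,
      iteratedFDeriv ℝ 2 w a ![x - y, x - y] ≤ ‖x - y‖ ^ 2 := fun a ha =>
    (hw.continuousOn_iteratedFDeriv_two_apply isOpen_ball _).le_of_le_of_dense_compl isOpen_ball
      hS.dense_compl (fun b hb => (hHess b hb _ hv).le) ha
  have hlt := hHess _ ⟨(convex_ball 0 1).add_smul_sub_mem hy hx ht, htS⟩ _ hv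
  rw [inner_sub_left, ← InnerProductSpace.toDual_apply_apply,
    ← InnerProductSpace.toDual_apply_apply, toDual_gradient, toDual_gradient]
  exact fderiv_apply_sub_lt_of_iteratedFDeriv_two_le isOpen_ball (convex_ball 0 1) hw hx hy hle
    ⟨t, ht, hlt⟩

/-- If `w` is `C²` on the unit ball and its Hessian satisfies `D²w(x)[v,v] < |v|²` for all
nonzero `v`, away from a discrete set `S`, then for all distinct points `x, y` of the ball,
`⟨Dw(x) - Dw(y), x - y⟩ < |x - y|²`. -/
theorem gradient_monotonicity_of_hessian_lt_one
    (n : ℕ) (hn : 1 ≤ n)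
    (w : EuclideanSpace ℝ (Fin n) → ℝ)
    (hw : ContDiffOn ℝ 2 w (Metric.ball 0 1))
    (S : Set (EuclideanSpace ℝ (Fin n)))
    (hS : S ⊆ Metric.ball 0 1) (hSdisc : DiscreteTopology S)
    (hHess : ∀ x ∈ Metric.ball (0 : EuclideanSpace ℝ (Fin n)) 1 \ S,
      ∀ v : EuclideanSpace ℝ (Fin n), v ≠ 0 →
        iteratedFDeriv ℝ 2 w x ![v, v] < ‖v‖ ^ 2) :
    ∀ x ∈ Metric.ball (0 : EuclideanSpace ℝ (Fin n)) 1,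
      ∀ y ∈ Metric.ball (0 : EuclideanSpace ℝ (Fin n)) 1, x ≠ y →
        ⟪gradient w x - gradient w y, x - y⟫ < ‖x - y‖ ^ 2 :=
  gradient_monotonicity_of_hessian_lt_one_general n w hw S hSdisc hHess
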